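/- For all natural numbers a, b one has {tr(Z X^a), tr(Z X^b)} = Σ_{r=1}^{a} tr(Z X^r Z X^{a+b−r}) − Σ_{r=1}^{b} tr(Z X^r Z X^{a+b−r}) in 𝒪ₙ. -/

import Mathlib

open Matrix Finset

/-- The polynomial ring `𝒪ₙ = ℂ[X_{ij}, Z_{ij}]` in the entries of two `n × n` matrices. -/
noncomputable abbrev Oring (n : ℕ) : Type :=
  MvPolynomial ((Fin n × Fin n) ⊕ (Fin n × Fin n)) ℂ

/-- The matrix `X` with polynomial entries `X_{ij}`. -/
noncomputable def Xm (n : ℕ) : Matrix (Fin n) (Fin n) (Oring n) :=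
  Matrix.of fun i j => MvPolynomial.X (Sum.inl (i, j))

/-- The matrix `Z` with polynomial entries `Z_{ij}`. -/
noncomputable def Zm (n : ℕ) : Matrix (Fin n) (Fin n) (Oring n) :=
  Matrix.of fun i j => MvPolynomial.X (Sum.inr (i, j))

/-- Kronecker delta in `𝒪ₙ`. -/
noncomputable def kd (n : ℕ) (i j : Fin n) : Oring n := if i = j then 1 else 0

/-!
The bracket `{f, -}` with a fixed `f` is a derivation of `𝒪ₙ`, so `{f, tr(Z Xᵇ)}` is
`tr(Xᵇ {f, Z}) + tr(S_b {f, X})`, where `{f, M}` is taken entrywise and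
`S_b = ∑_{i+j=b-1} Xⁱ Z Xʲ` comes from differentiating `Xᵇ`. Applying the same expansion to
`f = tr(Z Xᵃ)` with the derivations `{X_uv, -}` and `{Z_uv, -}`, the generator brackets give
`{X_uv, tr(Z Xᵃ)} = (X Z Xᵃ)_uv` and `{Z_uv, tr(Z Xᵃ)} = -(Z X S_a)_uv`; the only input beyond
expanding products is the telescoping identity `S_a X - X S_a = Z Xᵃ - Xᵃ Z`. By antisymmetry
`{tr(Z Xᵃ), tr(Z Xᵇ)} = tr(Xᵇ Z X S_a) - tr(S_b X Z Xᵃ)`, and cyclicity of the trace turns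
these two terms into the two sums.
-/

section Sandwich
variable {A : Type*} [Ring A] (X Z : A)

-- The derivative of `X ↦ X ^ a` in the direction `Z`.
def sandwichSum (a : ℕ) : A := ∑ i ∈ range a, X ^ i * Z * X ^ (a - 1 - i)

lemma sandwichSum_succ (a : ℕ) :
    sandwichSum X Z (a + 1) = sandwichSum X Z a * X + X ^ a * Z := by
  rw [sandwichSum, sum_range_succ, Nat.add_sub_cancel, Nat.sub_self, pow_zero, mul_one,
    sandwichSum, sum_mul]
  congr 1
  refine sum_congr rfl fun i hi => ?_
  rw [show a - i = a - 1 - i + 1 by grind, pow_succ, mul_assoc _ _ X]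

lemma sandwichSum_succ' (a : ℕ) :
    sandwichSum X Z (a + 1) = Z * X ^ a + X * sandwichSum X Z a := by
  rw [sandwichSum, sum_range_succ', sandwichSum, mul_sum, add_comm]
  simp only [pow_zero, one_mul, Nat.add_sub_cancel, Nat.sub_zero, pow_succ', mul_assoc]
  congr 1
  refine sum_congr rfl fun i _ => ?_
  rw [show a - (i + 1) = a - 1 - i by omega]

lemma sandwichSum_mul_sub_mul_sandwichSum (a : ℕ) :
    sandwichSum X Z a * X - X * sandwichSum X Z a = Z * X ^ a - X ^ a * Z := by
  rw [sub_eq_sub_iff_add_eq_add, ← sandwichSum_succ, sandwichSum_succ']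

lemma mul_sandwichSum_mul_pow (c e : ℕ) :
    X * sandwichSum X Z c * X ^ e = ∑ r ∈ Icc 1 c, X ^ r * Z * X ^ (c + e - r) := by
  rw [← Ico_add_one_right_eq_Icc, sum_Ico_eq_sum_range, Nat.add_sub_cancel, sandwichSum,
    mul_sum, sum_mul]
  refine sum_congr rfl fun i hi => ?_
  rw [add_comm 1 i, pow_succ', show c + e - (i + 1) = c - 1 - i + e by grind, pow_add]
  simp only [mul_assoc]

lemma pow_mul_sandwichSum_mul (c e : ℕ) :
    X ^ e * sandwichSum X Z c * X = ∑ r ∈ Icc 1 c, X ^ (c + e - r) * Z * X ^ r := by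
  rw [← Ico_add_one_right_eq_Icc, sum_Ico_eq_sum_range, Nat.add_sub_cancel, sandwichSum,
    mul_sum, sum_mul, ← sum_range_reflect]
  refine sum_congr rfl fun i hi => ?_
  rw [add_comm 1 i, pow_succ, show c - 1 - (c - 1 - i) = i by grind,
    show c + e - (i + 1) = e + (c - 1 - i) by grind, pow_add]
  simp only [mul_assoc]

end Sandwich

section SandwichTrace
variable {R : Type*} [CommRing R] {ι : Type*} [Fintype ι] [DecidableEq ι]
  (X Z : Matrix ι ι R)

lemma trace_pow_mul_mul_sandwichSum (a b : ℕ) :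
    (X ^ b * (Z * X * sandwichSum X Z a)).trace =
      ∑ r ∈ Icc 1 a, (Z * X ^ r * Z * X ^ (a + b - r)).trace := by
  rw [trace_mul_comm, mul_assoc Z, mul_assoc Z, mul_sandwichSum_mul_pow, mul_sum, trace_sum]
  simp only [mul_assoc]

lemma trace_sandwichSum_mul_mul_pow (a b : ℕ) :
    (sandwichSum X Z b * (X * Z * X ^ a)).trace =
      ∑ r ∈ Icc 1 b, (Z * X ^ r * Z * X ^ (a + b - r)).trace := by
  rw [show sandwichSum X Z b * (X * Z * X ^ a) = sandwichSum X Z b * X * (Z * X ^ a) by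
      simp only [mul_assoc],
    trace_mul_comm, mul_assoc Z, ← mul_assoc (X ^ a), pow_mul_sandwichSum_mul, mul_sum, trace_sum]
  refine sum_congr rfl fun r _ => ?_
  rw [show Z * (X ^ (b + a - r) * Z * X ^ r) = Z * X ^ (b + a - r) * (Z * X ^ r) by
      simp only [mul_assoc],
    trace_mul_comm, add_comm b a]
  simp only [mul_assoc]

end SandwichTrace

def Derivation.ofLeibniz {R : Type*} [CommRing R] (d : R → R)
    (hadd : ∀ x y, d (x + y) = d x + d y) (hleib : ∀ x y, d (x * y) = d x * y + x * d y) :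
    Derivation ℤ R R :=
  Derivation.mk' (AddMonoidHom.mk' d hadd).toIntLinearMap fun x y => by
    simp [hleib, mul_comm, add_comm]

namespace Derivation
variable {S R : Type*} [CommSemiring S] [CommRing R] [Algebra S R] (D : Derivation S R R)
  {ι : Type*} [Fintype ι]

lemma map_matrix_mul (M N : Matrix ι ι R) : (M * N).map D = M.map D * N + M * N.map D := by
  ext i j
  simp [mul_apply, leibniz, sum_add_distrib, mul_comm, add_comm]

lemma map_matrix_pow [DecidableEq ι] (M : Matrix ι ι R) (k : ℕ) :
    (M ^ k).map D = ∑ i ∈ range k, M ^ (k - 1 - i) * M.map D * M ^ i := by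
  induction k with
  | zero => ext i j; simp [one_apply, apply_ite D]
  | succ k ih =>
    rw [pow_succ', map_matrix_mul, ih, sum_range_succ, mul_sum, add_comm]
    congr 1
    · refine sum_congr rfl fun i hi => ?_
      rw [← mul_assoc, ← mul_assoc, ← pow_succ', show k - 1 - i + 1 = k + 1 - 1 - i by grind]
    · simp

lemma apply_trace_mul_pow [DecidableEq ι] (X Z : Matrix ι ι R) (a : ℕ) :
    D (Z * X ^ a).trace = (X ^ a * Z.map D).trace + (sandwichSum X Z a * X.map D).trace := by
  rw [AddMonoidHom.map_trace, map_matrix_mul, trace_add, trace_mul_comm (Z.map D),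
    map_matrix_pow, sandwichSum, mul_sum, sum_mul, trace_sum, trace_sum]
  congr 1
  refine sum_congr rfl fun i _ => ?_
  rw [← mul_assoc, trace_mul_comm, ← mul_assoc, ← mul_assoc]

end Derivation

section Bracket
variable {n : ℕ} (br : Oring n → Oring n → Oring n)
variable (hanti : ∀ f g : Oring n, br f g = - br g f)
variable (hXX : ∀ i j u v : Fin n,
  br (Xm n i j) (Xm n u v) =
    (2⁻¹ : ℂ) • ((Xm n ^ 2) u j * kd n i v) - (2⁻¹ : ℂ) • (kd n u j * (Xm n ^ 2) i v))
variable (hZZ : ∀ i j u v : Fin n,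
  br (Zm n i j) (Zm n u v) =
    (2⁻¹ : ℂ) • (kd n u j * (Zm n ^ 2) i v) - (2⁻¹ : ℂ) • ((Zm n ^ 2) u j * kd n i v))
variable (hXZ : ∀ i j u v : Fin n,
  br (Xm n i j) (Zm n u v) =
    (2⁻¹ : ℂ) • ((Zm n * Xm n) u j * kd n i v) + (2⁻¹ : ℂ) • (kd n u j * (Xm n * Zm n) i v) +
      (2⁻¹ : ℂ) • (Zm n u j * Xm n i v) - (2⁻¹ : ℂ) • (Xm n u j * Zm n i v))

-- `{g, M}` only enters through `tr(C · {g, M})`, see `Derivation.apply_trace_mul_pow`.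
include hXX in
lemma trace_mul_map_bracket_X_X (u v : Fin n) (C : Matrix (Fin n) (Fin n) (Oring n)) :
    (C * (Xm n).map (br (Xm n u v))).trace =
      (2⁻¹ : ℂ) • (C * Xm n ^ 2 - Xm n ^ 2 * C) u v := by
  simp [trace, mul_apply, hXX, kd, mul_sub, sum_sub_distrib, smul_sub, smul_sum, mul_comm]

include hXZ in
lemma trace_mul_map_bracket_X_Z (u v : Fin n) (C : Matrix (Fin n) (Fin n) (Oring n)) :
    (C * (Zm n).map (br (Xm n u v))).trace = (2⁻¹ : ℂ) •
      (C * (Zm n * Xm n) + Xm n * Zm n * C + Xm n * (C * Zm n) - Zm n * (C * Xm n)) u v := by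
  simp only [trace, Matrix.diag, mul_apply, map_apply, Matrix.add_apply, Matrix.sub_apply]
  simp [hXZ, mul_apply, kd, mul_add, mul_sub, sum_add_distrib, sum_sub_distrib, smul_add, smul_sub,
    smul_sum, mul_sum, mul_comm, mul_left_comm]

include hZZ in
lemma trace_mul_map_bracket_Z_Z (u v : Fin n) (C : Matrix (Fin n) (Fin n) (Oring n)) :
    (C * (Zm n).map (br (Zm n u v))).trace =
      (2⁻¹ : ℂ) • (Zm n ^ 2 * C - C * Zm n ^ 2) u v := by
  simp [trace, mul_apply, hZZ, kd, mul_sub, sum_sub_distrib, smul_sub, smul_sum, mul_comm]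

include hanti hXZ in
lemma trace_mul_map_bracket_Z_X (u v : Fin n) (C : Matrix (Fin n) (Fin n) (Oring n)) :
    (C * (Xm n).map (br (Zm n u v))).trace = (2⁻¹ : ℂ) •
      (Xm n * (C * Zm n) - Zm n * Xm n * C - C * (Xm n * Zm n) - Zm n * (C * Xm n)) u v := by
  simp only [trace, Matrix.diag, mul_apply, map_apply, Matrix.sub_apply]
  simp [hanti (Zm n u v), hXZ, mul_apply, kd, mul_sub, sum_sub_distrib, smul_sub, smul_sum,
    mul_sum, mul_comm, mul_left_comm, sub_add_eq_sub_sub]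

variable (hadd : ∀ f g h : Oring n, br f (g + h) = br f g + br f h)
variable (hleib : ∀ f g h : Oring n, br f (g * h) = br f g * h + g * br f h)

include hadd hleib in
lemma bracket_trace_mul_pow (f : Oring n) (X Z : Matrix (Fin n) (Fin n) (Oring n)) (a : ℕ) :
    br f (Z * X ^ a).trace =
      (X ^ a * Z.map (br f)).trace + (sandwichSum X Z a * X.map (br f)).trace :=
  (Derivation.ofLeibniz _ (hadd f) (hleib f)).apply_trace_mul_pow X Z a

include hadd hleib hXX hXZ in
lemma bracket_X_trace_Z_mul_pow (u v : Fin n) (a : ℕ) :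
    br (Xm n u v) (Zm n * Xm n ^ a).trace = (Xm n * Zm n * Xm n ^ a) u v := by
  rw [bracket_trace_mul_pow br hadd hleib, trace_mul_map_bracket_X_Z br hXZ,
    trace_mul_map_bracket_X_X br hXX, ← Matrix.smul_apply, ← Matrix.smul_apply,
    ← Matrix.add_apply]
  refine congrArg (fun M : Matrix (Fin n) (Fin n) (Oring n) => M u v) ?_
  set X := Xm n
  set Z := Zm n
  set S := sandwichSum X Z a
  have hcomm : S * X ^ 2 - X ^ 2 * S = (S * X - X * S) * X + X * (S * X - X * S) := by
    noncomm_ring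
  rw [hcomm, sandwichSum_mul_sub_mul_sandwichSum]
  simp only [mul_sub, sub_mul, mul_assoc]
  module

include hadd hleib hZZ hXZ hanti in
lemma bracket_Z_trace_Z_mul_pow (u v : Fin n) (a : ℕ) :
    br (Zm n u v) (Zm n * Xm n ^ a).trace =
      -(Zm n * Xm n * sandwichSum (Xm n) (Zm n) a) u v := by
  rw [bracket_trace_mul_pow br hadd hleib, trace_mul_map_bracket_Z_Z br hZZ,
    trace_mul_map_bracket_Z_X br hanti hXZ,
    ← Matrix.smul_apply, ← Matrix.smul_apply, ← Matrix.add_apply, ← Matrix.neg_apply]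
  refine congrArg (fun M : Matrix (Fin n) (Fin n) (Oring n) => M u v) ?_
  set X := Xm n
  set Z := Zm n
  set S := sandwichSum X Z a
  have hSX : S * X = X * S + (Z * X ^ a - X ^ a * Z) := by
    rw [← sandwichSum_mul_sub_mul_sandwichSum]; abel
  rw [← mul_assoc S, hSX]
  simp only [sq, mul_add, mul_sub, add_mul, sub_mul, mul_assoc]
  module

end Bracket

theorem trace_ZX_bracket_trace_ZX_general (n : ℕ)
    (br : Oring n → Oring n → Oring n)
    (hadd : ∀ f g h : Oring n, br f (g + h) = br f g + br f h)
    (hleib : ∀ f g h : Oring n, br f (g * h) = br f g * h + g * br f h)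
    (hanti : ∀ f g : Oring n, br f g = - br g f)
    (hXX : ∀ i j u v : Fin n,
      br (Xm n i j) (Xm n u v) =
        (2⁻¹ : ℂ) • ((Xm n ^ 2) u j * kd n i v) - (2⁻¹ : ℂ) • (kd n u j * (Xm n ^ 2) i v))
    (hZZ : ∀ i j u v : Fin n,
      br (Zm n i j) (Zm n u v) =
        (2⁻¹ : ℂ) • (kd n u j * (Zm n ^ 2) i v) - (2⁻¹ : ℂ) • ((Zm n ^ 2) u j * kd n i v))
    (hXZ : ∀ i j u v : Fin n,
      br (Xm n i j) (Zm n u v) =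
        (2⁻¹ : ℂ) • ((Zm n * Xm n) u j * kd n i v)
          + (2⁻¹ : ℂ) • (kd n u j * (Xm n * Zm n) i v)
          + (2⁻¹ : ℂ) • (Zm n u j * Xm n i v)
          - (2⁻¹ : ℂ) • (Xm n u j * Zm n i v))
    (a b : ℕ) :
    br (Matrix.trace (Zm n * Xm n ^ a)) (Matrix.trace (Zm n * Xm n ^ b)) =
      (∑ r ∈ Finset.Icc 1 a, Matrix.trace (Zm n * Xm n ^ r * Zm n * Xm n ^ (a + b - r)))
        - ∑ r ∈ Finset.Icc 1 b, Matrix.trace (Zm n * Xm n ^ r * Zm n * Xm n ^ (a + b - r)) := by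
  set f := (Zm n * Xm n ^ a).trace
  have hX : (Xm n).map (br f) = -(Xm n * Zm n * Xm n ^ a) := by
    ext i j
    rw [map_apply, hanti, bracket_X_trace_Z_mul_pow br hXX hXZ hadd hleib, neg_apply]
  have hZ : (Zm n).map (br f) = Zm n * Xm n * sandwichSum (Xm n) (Zm n) a := by
    ext i j
    rw [map_apply, hanti, bracket_Z_trace_Z_mul_pow br hanti hZZ hXZ hadd hleib, neg_neg]
  rw [bracket_trace_mul_pow br hadd hleib, hX, hZ, mul_neg, trace_neg,
    trace_pow_mul_mul_sandwichSum, trace_sandwichSum_mul_mul_pow, ← sub_eq_add_neg]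

/-- `{tr(Z X^a), tr(Z X^b)} = Σ_{r=1}^{a} tr(Z X^r Z X^{a+b−r}) − Σ_{r=1}^{b} tr(Z X^r Z X^{a+b−r})`. -/
theorem trace_ZX_bracket_trace_ZX (n : ℕ) (hn : 1 ≤ n)
    (br : Oring n → Oring n → Oring n)
    (hadd : ∀ f g h : Oring n, br f (g + h) = br f g + br f h)
    (hsmul : ∀ (c : ℂ) (f g : Oring n), br f (c • g) = c • br f g)
    (hleib : ∀ f g h : Oring n, br f (g * h) = br f g * h + g * br f h)
    (hanti : ∀ f g : Oring n, br f g = - br g f)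
    (hXX : ∀ i j u v : Fin n,
      br (Xm n i j) (Xm n u v) =
        (2⁻¹ : ℂ) • ((Xm n ^ 2) u j * kd n i v) - (2⁻¹ : ℂ) • (kd n u j * (Xm n ^ 2) i v))
    (hZZ : ∀ i j u v : Fin n,
      br (Zm n i j) (Zm n u v) =
        (2⁻¹ : ℂ) • (kd n u j * (Zm n ^ 2) i v) - (2⁻¹ : ℂ) • ((Zm n ^ 2) u j * kd n i v))
    (hXZ : ∀ i j u v : Fin n,
      br (Xm n i j) (Zm n u v) =
        (2⁻¹ : ℂ) • ((Zm n * Xm n) u j * kd n i v)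
          + (2⁻¹ : ℂ) • (kd n u j * (Xm n * Zm n) i v)
          + (2⁻¹ : ℂ) • (Zm n u j * Xm n i v)
          - (2⁻¹ : ℂ) • (Xm n u j * Zm n i v))
    (a b : ℕ) :
    br (Matrix.trace (Zm n * Xm n ^ a)) (Matrix.trace (Zm n * Xm n ^ b)) =
      (∑ r ∈ Finset.Icc 1 a, Matrix.trace (Zm n * Xm n ^ r * Zm n * Xm n ^ (a + b - r)))
        - ∑ r ∈ Finset.Icc 1 b, Matrix.trace (Zm n * Xm n ^ r * Zm n * Xm n ^ (a + b - r)) :=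
  trace_ZX_bracket_trace_ZX_general n br hadd hleib hanti hXX hZZ hXZ a b
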